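/- Let {P_m}_{m=0}^{M-1} and {Q_n}_{n=0}^{N-1} be two families of mutually orthogonal projections each summing to the identity on a finite-dimensional Hilbert space, such that {Q_n} refines {P_m}: for every m there is a subset Λ_m ⊆ {0,…,N-1} with P_m = Σ_{n∈Λ_m} Q_n, and the Λ_m partition {0,…,N-1}. Then for every density operator ρ, 1 - Σ_n Tr[(Q_n √ρ Q_n)^2] ≥ 1 - Σ_m Tr[(P_m √ρ P_m)^2]. -/

import Mathlib

/-!
For Hermitian `A` and `P = ∑_{n ∈ Λ} Q_n` with the `Q_n` Hermitian and mutually orthogonal,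
orthogonality and cyclicity of the trace give
`Tr[(P A P)^2] = ∑_{n, n' ∈ Λ} Tr[X_{nn'} X_{nn'}ᴴ]` with `X_{nn'} = Q_n A Q_{n'}`.
Every term is a squared Frobenius norm, and the diagonal terms are `Tr[(Q_n A Q_n)^2]`, so
dropping the off-diagonal ones gives `∑_{n ∈ Λ} Tr[(Q_n A Q_n)^2] ≤ Tr[(P A P)^2]`.
Apply this to the Hermitian `A = √ρ` on each block `Λ_m`.
-/

open scoped ComplexOrder

open Classical in
/-- The positive semidefinite square root of a matrix (zero if not psd). -/
noncomputable def msqrt {d : ℕ} (ρ : Matrix (Fin d) (Fin d) ℂ) : Matrix (Fin d) (Fin d) ℂ :=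
  if h : ρ.PosSemidef then
    (h.1.eigenvectorUnitary : Matrix (Fin d) (Fin d) ℂ) *
      Matrix.diagonal ((↑) ∘ (Real.sqrt ·) ∘ h.1.eigenvalues) *
      (star h.1.eigenvectorUnitary : Matrix (Fin d) (Fin d) ℂ)
  else 0

open Matrix

theorem isHermitian_msqrt {d : ℕ} (ρ : Matrix (Fin d) (Fin d) ℂ) : (msqrt ρ).IsHermitian := by
  unfold msqrt
  split_ifs with h
  · rw [star_eq_conjTranspose]
    exact isHermitian_mul_mul_conjTranspose _
      (isHermitian_diagonal_of_self_adjoint _ (by ext; simp [Function.comp_def]))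
  · exact isHermitian_zero

section Orthogonal

variable {ι R : Type*} [NonUnitalNonAssocSemiring R] {Q : ι → R} {s : Finset ι}

theorem sum_mul_eq_mul_self_of_orthogonal (hQ : ∀ i j, i ≠ j → Q i * Q j = 0) {j : ι}
    (hj : j ∈ s) : (∑ i ∈ s, Q i) * Q j = Q j * Q j := by
  rw [Finset.sum_mul, Finset.sum_eq_single_of_mem j hj fun i _ hij => hQ i j hij]

theorem mul_sum_eq_mul_self_of_orthogonal (hQ : ∀ i j, i ≠ j → Q i * Q j = 0) {i : ι}
    (hi : i ∈ s) : Q i * ∑ j ∈ s, Q j = Q i * Q i := by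
  rw [Finset.mul_sum, Finset.sum_eq_single_of_mem i hi fun j _ hji => hQ i j hji.symm]

end Orthogonal

theorem trace_sq_compression_eq_sum {ι n R : Type*} [Fintype n] [DecidableEq n]
    [CommSemiring R] {Q : ι → Matrix n n R} {s : Finset ι}
    (hQ : ∀ i j, i ≠ j → Q i * Q j = 0) (A : Matrix n n R) :
    (((∑ i ∈ s, Q i) * A * ∑ i ∈ s, Q i) ^ 2).trace =
      ∑ i ∈ s, ∑ j ∈ s, (Q i * A * Q j * (Q j * A * Q i)).trace := by
  set P := ∑ i ∈ s, Q i
  have hexpand : P * A * P = ∑ i ∈ s, ∑ j ∈ s, Q i * A * Q j := by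
    simp only [P, Finset.sum_mul, Finset.mul_sum]
    exact Finset.sum_comm
  rw [sq]
  nth_rw 1 [hexpand]
  simp only [Finset.sum_mul, trace_sum]
  refine Finset.sum_congr rfl fun i hi => Finset.sum_congr rfl fun j hj => ?_
  calc (Q i * A * Q j * (P * A * P)).trace
      = (P * (Q i * A * Q j) * (P * A)).trace := by
        rw [← Matrix.mul_assoc, trace_mul_cycle]
    _ = (Q i * Q i * A * (Q j * Q j) * A).trace := by
        rw [← sum_mul_eq_mul_self_of_orthogonal hQ hi,
          ← mul_sum_eq_mul_self_of_orthogonal hQ hj]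
        simp only [P, Matrix.mul_assoc]
    _ = (Q i * A * Q j * (Q j * A * Q i)).trace := by
        simp only [Matrix.mul_assoc]; rw [trace_mul_comm]; simp only [Matrix.mul_assoc]

section Hermitian

variable {ι m n 𝕜 : Type*} [Fintype m] [Fintype n] [RCLike 𝕜]

theorem re_trace_mul_conjTranspose_nonneg (X : Matrix m n 𝕜) :
    0 ≤ RCLike.re (X * Xᴴ).trace :=
  (RCLike.nonneg_iff.mp (posSemidef_self_mul_conjTranspose X).trace_nonneg).1

theorem sum_re_trace_sq_compression_le [DecidableEq n] {Q : ι → Matrix n n 𝕜} {s : Finset ι}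
    (hQh : ∀ i, (Q i).IsHermitian) (hQo : ∀ i j, i ≠ j → Q i * Q j = 0)
    {A : Matrix n n 𝕜} (hA : A.IsHermitian) :
    ∑ i ∈ s, RCLike.re ((Q i * A * Q i) ^ 2).trace ≤
      RCLike.re (((∑ i ∈ s, Q i) * A * ∑ i ∈ s, Q i) ^ 2).trace := by
  have hadj : ∀ i j, Q j * A * Q i = (Q i * A * Q j)ᴴ := fun i j => by
    simp only [conjTranspose_mul, (hQh i).eq, (hQh j).eq, hA.eq, Matrix.mul_assoc]
  rw [trace_sq_compression_eq_sum hQo, map_sum]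
  refine Finset.sum_le_sum fun i hi => ?_
  calc RCLike.re ((Q i * A * Q i) ^ 2).trace
      = RCLike.re (Q i * A * Q i * (Q i * A * Q i)ᴴ).trace := by rw [sq, ← hadj]
    _ ≤ ∑ j ∈ s, RCLike.re (Q i * A * Q j * (Q i * A * Q j)ᴴ).trace :=
        Finset.single_le_sum (f := fun j => RCLike.re (Q i * A * Q j * (Q i * A * Q j)ᴴ).trace)
          (fun j _ => re_trace_mul_conjTranspose_nonneg _) hi
    _ = RCLike.re (∑ j ∈ s, (Q i * A * Q j * (Q j * A * Q i)).trace) := by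
        simp only [map_sum, ← hadj]

end Hermitian

theorem affinity_coherence_order_preserving_general {d M N : ℕ}
    (P : Fin M → Matrix (Fin d) (Fin d) ℂ) (Q : Fin N → Matrix (Fin d) (Fin d) ℂ)
    (hQh : ∀ n, (Q n).IsHermitian)
    (hQo : ∀ n n', n ≠ n' → Q n * Q n' = 0)
    (Λ : Fin M → Finset (Fin N))
    (hdisj : ∀ m m', m ≠ m' → Disjoint (Λ m) (Λ m'))
    (hcover : Finset.univ.biUnion Λ = Finset.univ)
    (hrefine : ∀ m, P m = ∑ n ∈ Λ m, Q n)
    (ρ : Matrix (Fin d) (Fin d) ℂ) :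
    1 - ∑ m, ((P m * msqrt ρ * P m) ^ 2).trace.re ≤
      1 - ∑ n, ((Q n * msqrt ρ * Q n) ^ 2).trace.re := by
  have hsplit : ∑ n, ((Q n * msqrt ρ * Q n) ^ 2).trace.re =
      ∑ m, ∑ n ∈ Λ m, ((Q n * msqrt ρ * Q n) ^ 2).trace.re := by
    rw [← hcover, Finset.sum_biUnion fun m _ m' _ h => hdisj m m' h]
  suffices h : ∑ m, ∑ n ∈ Λ m, ((Q n * msqrt ρ * Q n) ^ 2).trace.re ≤
      ∑ m, ((P m * msqrt ρ * P m) ^ 2).trace.re by linarith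
  gcongr with m
  rw [hrefine m]
  exact sum_re_trace_sq_compression_le hQh hQo (isHermitian_msqrt ρ)

/-- Order-preserving property: if `{Q_n}` refines `{P_m}` (each `P_m = Σ_{n∈Λ_m} Q_n`
with the `Λ_m` partitioning the index set), then the generalized 1/2-affinity of
coherence with respect to `Q` is at least that with respect to `P`. -/
theorem affinity_coherence_order_preserving {d M N : ℕ}
    (P : Fin M → Matrix (Fin d) (Fin d) ℂ) (Q : Fin N → Matrix (Fin d) (Fin d) ℂ)
    (hPh : ∀ m, (P m).IsHermitian) (hPi : ∀ m, P m * P m = P m)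
    (hPo : ∀ m m', m ≠ m' → P m * P m' = 0) (hPs : ∑ m, P m = 1)
    (hQh : ∀ n, (Q n).IsHermitian) (hQi : ∀ n, Q n * Q n = Q n)
    (hQo : ∀ n n', n ≠ n' → Q n * Q n' = 0) (hQs : ∑ n, Q n = 1)
    (Λ : Fin M → Finset (Fin N))
    (hdisj : ∀ m m', m ≠ m' → Disjoint (Λ m) (Λ m'))
    (hcover : Finset.univ.biUnion Λ = Finset.univ)
    (hrefine : ∀ m, P m = ∑ n ∈ Λ m, Q n)
    (ρ : Matrix (Fin d) (Fin d) ℂ) (hρ : ρ.PosSemidef) (hρtr : ρ.trace = 1) :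
    1 - ∑ m, ((P m * msqrt ρ * P m) ^ 2).trace.re ≤
      1 - ∑ n, ((Q n * msqrt ρ * Q n) ^ 2).trace.re :=
  affinity_coherence_order_preserving_general P Q hQh hQo Λ hdisj hcover hrefine ρ
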